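/- arXiv:2605.03556 — 4 statements merged into one kernel-verified Lean document; each statement's English description precedes it below -/
import Mathlib

section
/- The Venn polytope τ^(F) has exactly 2^n vertices, namely the points (ζ^{(F,T)}, e^{(T)}) for T ⊆ [n], and these 2^n points are affinely independent; in particular the dimension of τ^(F) is 2^n − 1. -/
/-!
`τ^(F)` is the image of the standard simplex of `ℚ^{2^[n]}` under the linear map
`x ↦ (ζ x, x)`, where `(ζ x)_S = ∑_{T ⊇ S} x_T`; this map sends the vertex `e^(T)` to
`(ζ^(F,T), e^(T))`. Being injective (its second component is the identity), it maps the simplex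
onto a simplex: vertices to extreme points, affinely independent points to affinely independent
points, so the dimension stays `2^n - 1`.
-/

open Set

section InjectiveImage

variable {k E F : Type*} [Ring k] [PartialOrder k] [IsOrderedRing k]
  [AddCommGroup E] [Module k E] [AddCommGroup F] [Module k F]

theorem LinearMap.image_extremePoints_of_injective (f : E →ₗ[k] F)
    (hf : Function.Injective f) (s : Set E) :
    f '' extremePoints k s = extremePoints k (f '' s) := by
  have hseg : ∀ x y, f '' openSegment k x y = openSegment k (f x) (f y) :=
    image_openSegment k f.toAffineMap
  ext y
  simp only [mem_image, mem_extremePoints_iff_left]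
  constructor
  · rintro ⟨x, ⟨hxs, hx⟩, rfl⟩
    refine ⟨⟨x, hxs, rfl⟩, ?_⟩
    rintro _ ⟨x₁, hx₁, rfl⟩ _ ⟨x₂, hx₂, rfl⟩ hmem
    obtain ⟨z, hz, hzx⟩ := (hseg x₁ x₂).symm ▸ hmem
    rw [hx x₁ hx₁ x₂ hx₂ (hf hzx ▸ hz)]
  · rintro ⟨⟨x, hxs, rfl⟩, hx⟩
    exact ⟨x, ⟨hxs, fun x₁ hx₁ x₂ hx₂ hmem =>
      hf (hx _ ⟨x₁, hx₁, rfl⟩ _ ⟨x₂, hx₂, rfl⟩ (hseg x₁ x₂ ▸ mem_image_of_mem f hmem))⟩, rfl⟩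

end InjectiveImage

section StdSimplex

variable {ι : Type*} [DecidableEq ι]

theorem LinearMap.affineIndependent_apply_single {k E : Type*} [Ring k] [AddCommGroup E]
    [Module k E] (f : (ι → k) →ₗ[k] E) (hf : Function.Injective f) :
    AffineIndependent k fun i => f (Pi.single i 1) :=
  (Pi.linearIndependent_single_one ι k).affineIndependent.map' f.toAffineMap hf

variable [Fintype ι]

theorem eq_single_of_mem_stdSimplex {k : Type*} [Semiring k] [PartialOrder k] {x : ι → k}
    (hx : x ∈ stdSimplex k ι) {i : ι} (hzero : ∀ j ≠ i, x j = 0) : x = Pi.single i 1 := by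
  have hxi : x i = 1 := by
    rw [← hx.2, Finset.sum_eq_single i (fun j _ hj => hzero j hj) (by simp)]
  ext j
  obtain rfl | hj := eq_or_ne j i
  · simp [hxi]
  · simp [hj, hzero j hj]

variable {k : Type*} [Field k] [LinearOrder k] [IsStrictOrderedRing k]

theorem extremePoints_stdSimplex :
    extremePoints k (stdSimplex k ι) = range fun i : ι => Pi.single i (1 : k) := by
  refine subset_antisymm ?_ ?_
  · rw [← convexHull_rangle_single_eq_stdSimplex]
    exact extremePoints_convexHull_subset
  rintro _ ⟨i, rfl⟩
  refine ⟨single_mem_stdSimplex k i, fun x hx y hy ⟨a, b, ha, hb, _, hxy⟩ => ?_⟩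
  refine eq_single_of_mem_stdSimplex hx fun j hj => ?_
  have hsum : a * x j + b * y j = 0 := by simpa [hj] using congrFun hxy j
  have hax := ((add_eq_zero_iff_of_nonneg (mul_nonneg ha.le (hx.1 j))
    (mul_nonneg hb.le (hy.1 j))).1 hsum).1
  exact (mul_eq_zero.1 hax).resolve_left ha.ne'

variable {E : Type*} [AddCommGroup E] [Module k E] (f : (ι → k) →ₗ[k] E)

theorem LinearMap.image_stdSimplex_eq_convexHull :
    f '' stdSimplex k ι = convexHull k (Set.range fun i => f (Pi.single i 1)) := by
  rw [← convexHull_rangle_single_eq_stdSimplex, f.image_convexHull, ← Set.range_comp]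
  rfl

theorem LinearMap.finrank_vectorSpan_image_stdSimplex [Nonempty ι] (hf : Function.Injective f) :
    Module.finrank k (vectorSpan k (f '' stdSimplex k ι)) = Fintype.card ι - 1 := by
  rw [f.image_stdSimplex_eq_convexHull, ← direction_affineSpan, affineSpan_convexHull,
    direction_affineSpan]
  exact (f.affineIndependent_apply_single hf).finrank_vectorSpan
    (Nat.succ_pred_eq_of_pos Fintype.card_pos).symm

end StdSimplex

def zetaTransform {α : Type*} [Fintype α] [DecidableEq α] (k : Type*) [CommSemiring k]
    (F : Finset (Finset α)) : (Finset α → k) →ₗ[k] (F → k) :=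
  LinearMap.pi fun S => ∑ T ∈ Finset.univ.filter (fun T => S.1 ⊆ T), LinearMap.proj T

@[simp]
theorem zetaTransform_apply {α : Type*} [Fintype α] [DecidableEq α] {k : Type*} [CommSemiring k]
    (F : Finset (Finset α)) (x : Finset α → k) (S : F) :
    zetaTransform k F x S = ∑ T ∈ Finset.univ.filter (fun T => S.1 ⊆ T), x T := by
  simp [zetaTransform]

theorem stmt8_general (n : ℕ) (F : Finset (Finset (Fin n)))
    (τ : Set (({S // S ∈ F} → ℚ) × (Finset (Fin n) → ℚ)))
    (hτ : τ = {p | (∑ T, p.2 T) = 1 ∧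
        (∀ S : {S // S ∈ F},
          ∑ T ∈ Finset.univ.filter (fun T : Finset (Fin n) => S.1 ⊆ T), p.2 T = p.1 S) ∧
        (∀ T, 0 ≤ p.2 T)})
    (v : Finset (Fin n) → ({S // S ∈ F} → ℚ) × (Finset (Fin n) → ℚ))
    (hv : ∀ T, v T = (fun S => if S.1 ⊆ T then 1 else 0, fun U => if U = T then 1 else 0)) :
    Set.extremePoints ℚ τ = Set.range v ∧
    AffineIndependent ℚ v ∧
    Module.finrank ℚ (vectorSpan ℚ τ) = 2 ^ n - 1 := by
  set f := (zetaTransform ℚ F).prod LinearMap.id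
  have hf : Function.Injective f := fun x y h => congrArg Prod.snd h
  have hvf : v = fun T => f (Pi.single T 1) := by
    funext T
    rw [hv]
    ext S <;> simp [f, Pi.single_apply]
  have hτf : τ = f '' stdSimplex ℚ (Finset (Fin n)) := by
    ext p
    rw [hτ]
    constructor
    · rintro ⟨hsum, hzeta, hnonneg⟩
      exact ⟨p.2, ⟨hnonneg, hsum⟩, Prod.ext (funext fun S => by simpa [f] using hzeta S) rfl⟩
    · rintro ⟨x, ⟨hnonneg, hsum⟩, rfl⟩
      exact ⟨hsum, fun S => by simp [f], hnonneg⟩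
  refine ⟨?_, hvf ▸ f.affineIndependent_apply_single hf, ?_⟩
  · rw [hτf, ← f.image_extremePoints_of_injective hf, extremePoints_stdSimplex,
      ← Set.range_comp, hvf]
    rfl
  · rw [hτf, f.finrank_vectorSpan_image_stdSimplex hf, Fintype.card_finset, Fintype.card_fin]

/-- The Venn polytope has exactly the `2^n` points `(ζ^(F,T), e^(T))` as vertices
(extreme points), these are affinely independent, and its dimension is `2^n - 1`. -/
theorem stmt8 (n : ℕ) (F : Finset (Finset (Fin n))) (hF : F.Nonempty)
    (τ : Set (({S // S ∈ F} → ℚ) × (Finset (Fin n) → ℚ)))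
    (hτ : τ = {p | (∑ T, p.2 T) = 1 ∧
        (∀ S : {S // S ∈ F},
          ∑ T ∈ Finset.univ.filter (fun T : Finset (Fin n) => S.1 ⊆ T), p.2 T = p.1 S) ∧
        (∀ T, 0 ≤ p.2 T)})
    (v : Finset (Fin n) → ({S // S ∈ F} → ℚ) × (Finset (Fin n) → ℚ))
    (hv : ∀ T, v T = (fun S => if S.1 ⊆ T then 1 else 0, fun U => if U = T then 1 else 0)) :
    Set.extremePoints ℚ τ = Set.range v ∧
    AffineIndependent ℚ v ∧
    Module.finrank ℚ (vectorSpan ℚ τ) = 2 ^ n - 1 :=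
  stmt8_general n F τ hτ v hv
end

section
/- For any ∅ ≠ F ⊆ 2^[n], the vectors ζ^{(F,T)} ∈ {0,1}^F for T ∈ {∅} ∪ F are affinely independent; consequently the correlation polytope ρ^(F) = conv{ζ^{(F,T)} : T ⊆ [n]} is full-dimensional in ℚ^F. -/
open scoped Classical

theorem affineIndependent_iff_linearIndependent_of_eq_zero {k V ι : Type*} [Ring k]
    [AddCommGroup V] [Module k V] {p : ι → V} {i₀ : ι} (h : p i₀ = 0) :
    AffineIndependent k p ↔ LinearIndependent k (fun i : {i // i ≠ i₀} => p i) := by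
  simp [affineIndependent_iff_linearIndependent_vsub k p i₀, h]

def zetaVector {α R : Type*} [DecidableEq α] [Zero R] [One R] (F : Finset (Finset α))
    (T : Finset α) : F → R :=
  fun S => if S.1 ⊆ T then 1 else 0

section

variable {α R : Type*} [DecidableEq α]

theorem zetaVector_empty [Zero R] [One R] {F : Finset (Finset α)} (hF : ∅ ∉ F) :
    zetaVector (R := R) F ∅ = 0 := by
  funext S
  have hS : ¬ S.1 ⊆ ∅ := fun h => hF (Finset.subset_empty.1 h ▸ S.2)
  simp [zetaVector, hS]

/-- Evaluate a vanishing combination at a member `m` of maximal cardinality among those with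
nonzero coefficient: `m` lies in no other member of the support, so its coefficient is `0`. -/
theorem linearIndependent_zetaVector [Ring R] (F : Finset (Finset α)) :
    LinearIndependent R (fun T : F => zetaVector (R := R) F T.1) := by
  rw [linearIndependent_iff']
  intro s g hsum
  by_contra! h
  obtain ⟨i₀, hi₀s, hi₀⟩ := h
  obtain ⟨m, hm, hmax⟩ := Finset.exists_max_image {i ∈ s | g i ≠ 0} (fun i => i.1.card)
    ⟨i₀, Finset.mem_filter.2 ⟨hi₀s, hi₀⟩⟩
  obtain ⟨hms, hgm⟩ := Finset.mem_filter.1 hm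
  have hm_eval := congrFun hsum m
  simp only [Finset.sum_apply, Pi.smul_apply, smul_eq_mul, Pi.zero_apply] at hm_eval
  rw [Finset.sum_eq_single_of_mem m hms] at hm_eval
  · simp [zetaVector] at hm_eval
    exact hgm hm_eval
  · intro i his hne
    by_cases hgi : g i = 0
    · simp [hgi]
    · have hsub : ¬ m.1 ⊆ i.1 := fun hsub => hne <| Subtype.ext <|
        (Finset.eq_of_subset_of_card_le hsub (hmax i (Finset.mem_filter.2 ⟨his, hgi⟩))).symm
      simp [zetaVector, hsub]

theorem affineIndependent_zetaVector [Ring R] {F : Finset (Finset α)} (hF : ∅ ∉ F) :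
    AffineIndependent R (fun T : {T // T = ∅ ∨ T ∈ F} => zetaVector (R := R) F T.1) := by
  rw [affineIndependent_iff_linearIndependent_of_eq_zero (i₀ := ⟨∅, Or.inl rfl⟩)
    (zetaVector_empty hF)]
  let e : {T : {T // T = ∅ ∨ T ∈ F} // T ≠ ⟨∅, Or.inl rfl⟩} → F :=
    fun T => ⟨T.1.1, T.1.2.resolve_left fun h => T.2 (Subtype.ext h)⟩
  have he : Function.Injective e := fun a b hab =>
    Subtype.ext <| Subtype.ext <| (congrArg Subtype.val hab :)
  exact (linearIndependent_zetaVector F).comp e he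

theorem card_subtype_eq_empty_or_mem [Fintype α] {F : Finset (Finset α)} (hF : ∅ ∉ F) :
    Fintype.card {T // T = ∅ ∨ T ∈ F} = F.card + 1 := by
  rw [Fintype.card_of_subtype (insert ∅ F) (by simp), Finset.card_insert_of_notMem hF]

theorem affineSpan_range_zetaVector_eq_top [DivisionRing R] [Fintype α]
    {F : Finset (Finset α)} (hF : ∅ ∉ F) :
    affineSpan R (Set.range fun T : {T // T = ∅ ∨ T ∈ F} => zetaVector (R := R) F T.1) = ⊤ := by
  rw [(affineIndependent_zetaVector hF).affineSpan_eq_top_iff_card_eq_finrank_add_one,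
    card_subtype_eq_empty_or_mem hF, Module.finrank_fintype_fun_eq_card, Fintype.card_coe]

end

theorem stmt9_general (n : ℕ) (F : Finset (Finset (Fin n))) (hFne : ∅ ∉ F) :
    AffineIndependent ℚ (fun T : {T : Finset (Fin n) // T = ∅ ∨ T ∈ F} =>
      (fun S : {S // S ∈ F} => if S.1 ⊆ T.1 then (1 : ℚ) else 0)) ∧
    affineSpan ℚ (convexHull ℚ {z : {S // S ∈ F} → ℚ |
      ∃ T : Finset (Fin n), z = fun S => if S.1 ⊆ T then 1 else 0}) = ⊤ := by
  refine ⟨affineIndependent_zetaVector hFne, ?_⟩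
  rw [affineSpan_convexHull, eq_top_iff, ← affineSpan_range_zetaVector_eq_top (R := ℚ) hFne]
  apply affineSpan_mono
  rintro _ ⟨T, rfl⟩
  exact ⟨T.1, rfl⟩

/-- The vectors `ζ^(F,T)` for `T ∈ {∅} ∪ F` are affinely independent; consequently
the correlation polytope is full-dimensional. -/
theorem stmt9 (n : ℕ) (F : Finset (Finset (Fin n))) (hF : F.Nonempty) (hFne : ∅ ∉ F) :
    AffineIndependent ℚ (fun T : {T : Finset (Fin n) // T = ∅ ∨ T ∈ F} =>
      (fun S : {S // S ∈ F} => if S.1 ⊆ T.1 then (1 : ℚ) else 0)) ∧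
    affineSpan ℚ (convexHull ℚ {z : {S // S ∈ F} → ℚ |
      ∃ T : Finset (Fin n), z = fun S => if S.1 ⊆ T then 1 else 0}) = ⊤ :=
  stmt9_general n F hFne
end

section
/- If there exists k ∈ [n] with {k} ∉ F, then the vectors (ζ^{(F,T)}, [T=∅]) for T ∈ {∅, {k}} ∪ F are affinely independent, and hence the union polytope σ^(F) is full-dimensional in ℚ^{|F|+1}. -/
open scoped Classical

/-- If some singleton `{k}` is missing from `F`, the points
`(ζ^(F,T), [T = ∅])` for `T ∈ {∅, {k}} ∪ F` are affinely independent, and hence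
the union polytope is full-dimensional. -/
theorem stmt13 (n : ℕ) (F : Finset (Finset (Fin n))) (hF : F.Nonempty) (hFne : ∅ ∉ F)
    (k : Fin n) (hk : ({k} : Finset (Fin n)) ∉ F) :
    AffineIndependent ℚ
      (fun T : {T : Finset (Fin n) // T = ∅ ∨ T = {k} ∨ T ∈ F} =>
        ((fun S : {S // S ∈ F} => if S.1 ⊆ T.1 then (1 : ℚ) else 0),
          if T.1 = ∅ then (1 : ℚ) else 0)) ∧
    affineSpan ℚ (convexHull ℚ {q : ({S // S ∈ F} → ℚ) × ℚ |
      ∃ T : Finset (Fin n),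
        q = (fun S => if S.1 ⊆ T then 1 else 0, if T = ∅ then 1 else 0)}) = ⊤ := by
  set ι := {T : Finset (Fin n) // T = ∅ ∨ T = {k} ∨ T ∈ F} with hι
  set p : ι → (({S // S ∈ F} → ℚ) × ℚ) :=
    (fun T : ι =>
      ((fun S : {S // S ∈ F} => if S.1 ⊆ T.1 then (1 : ℚ) else 0),
        if T.1 = ∅ then (1 : ℚ) else 0)) with hp
  have hai : AffineIndependent ℚ p := by
    rw [affineIndependent_iff_of_fintype]
    intro w hw hvs
    rw [Finset.weightedVSub_eq_linear_combination _ hw] at hvs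
    -- component equations
    have hsnd : ∑ i : ι, (if i.1 = ∅ then w i else 0) = 0 := by
      have := congrArg Prod.snd hvs
      rw [Prod.snd_sum] at this
      simpa [hp, smul_ite] using this
    have hfst : ∀ S : {S // S ∈ F},
        ∑ i : ι, (if S.1 ⊆ i.1 then w i else 0) = 0 := by
      intro S
      have := congrArg (fun q => q.1 S) hvs
      simp only [Prod.fst_sum, Finset.sum_apply, hp] at this
      simpa [smul_ite] using this
    -- vanishing on F, by downward induction on cardinality
    have hFzero : ∀ m : ℕ, ∀ i : ι, i.1 ∈ F → n + 1 ≤ i.1.card + m → w i = 0 := by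
      intro m
      induction m with
      | zero =>
        intro i hiF hcard
        have := i.1.card_le_univ
        simp at this
        omega
      | succ m ih =>
        intro i hiF hcard
        have hsum := hfst ⟨i.1, hiF⟩
        rw [Finset.sum_eq_single i] at hsum
        · simpa using hsum
        · intro j _ hji
          by_cases hsub : i.1 ⊆ j.1
          · rw [if_pos hsub]
            rcases j.2 with hj | hj | hj
            · exfalso
              rw [hj] at hsub
              have : i.1 = ∅ := Finset.subset_empty.mp hsub
              rw [this] at hiF; exact hFne hiF
            · exfalso
              rw [hj] at hsub
              rcases Finset.subset_singleton_iff.mp hsub with h | h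
              · rw [h] at hiF; exact hFne hiF
              · rw [h] at hiF; exact hk hiF
            · have hne : i.1 ≠ j.1 := fun h => hji (Subtype.ext h.symm)
              have hlt : i.1.card < j.1.card :=
                Finset.card_lt_card (lt_of_le_of_ne hsub hne)
              exact ih j hj (by omega)
          · exact if_neg hsub
        · intro h; exact absurd (Finset.mem_univ i) h
      -- end induction
    have hFzero' : ∀ i : ι, i.1 ∈ F → w i = 0 := fun i hi =>
      hFzero (n + 1) i hi (by omega)
    -- the empty-set index
    have hempty : ∀ i : ι, i.1 = ∅ → w i = 0 := by
      intro i hi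
      rw [Finset.sum_eq_single i] at hsnd
      · simpa [hi] using hsnd
      · intro j _ hji
        by_cases hj : j.1 = ∅
        · exact absurd (Subtype.ext (hj.trans hi.symm)) hji
        · exact if_neg hj
      · intro h; exact absurd (Finset.mem_univ i) h
    -- the {k} index
    have hkzero : ∀ i : ι, i.1 = ({k} : Finset (Fin n)) → w i = 0 := by
      intro i hi
      rw [Finset.sum_eq_single i] at hw
      · exact hw
      · intro j _ hji
        rcases j.2 with hj | hj | hj
        · exact hempty j hj
        · exact absurd (Subtype.ext (hj.trans hi.symm)) hji
        · exact hFzero' j hj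
      · intro h; exact absurd (Finset.mem_univ i) h
    intro i
    rcases i.2 with hi | hi | hi
    · exact hempty i hi
    · exact hkzero i hi
    · exact hFzero' i hi
  refine ⟨hai, ?_⟩
  have hcard : Fintype.card ι = F.card + 2 := by
    have he : ∀ T : Finset (Fin n),
        (T = ∅ ∨ T = ({k} : Finset (Fin n)) ∨ T ∈ F) ↔
          T ∈ insert ∅ (insert ({k} : Finset (Fin n)) F) := by
      intro T; simp
    rw [Fintype.card_congr (Equiv.subtypeEquivRight he), Fintype.card_coe]
    rw [Finset.card_insert_of_notMem, Finset.card_insert_of_notMem hk]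
    simp only [Finset.mem_insert]
    push_neg
    exact ⟨fun h => (Finset.singleton_ne_empty k) h.symm, hFne⟩
  have hrank : Module.finrank ℚ (({S // S ∈ F} → ℚ) × ℚ) = F.card + 1 := by
    rw [Module.finrank_prod, Module.finrank_pi, Module.finrank_self, Fintype.card_coe]
  have htop : affineSpan ℚ (Set.range p) = ⊤ :=
    hai.affineSpan_eq_top_iff_card_eq_finrank_add_one.mpr (by rw [hcard, hrank])
  rw [eq_top_iff, ← htop]
  apply affineSpan_mono
  rintro _ ⟨i, rfl⟩
  exact subset_convexHull ℚ _ ⟨i.1, rfl⟩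
end

section
/- Let G be a graph on vertex set [n] and set b_{{u}} = 1/n for all vertices u and b_{{u,v}} = 0 for all edges {u,v} ∈ E(G), with F = {{u} : u ∈ V(G)} ∪ E(G). Then the minimum of ∑_{∅≠T⊆[n]} x_T over all nonnegative (x_T)_{T⊆[n]} satisfying ∑_T x_T = 1, ∑_{u∈T} x_T = 1/n for all u, and ∑_{{u,v}⊆T} x_T = 0 for all edges {u,v}, equals χ_f(G)/n, where χ_f(G) is the fractional chromatic number of G. -/
/-!
A feasible `x` yields the fractional colouring `n • x` restricted to nonempty sets. Conversely,
since independent sets are closed under taking subsets, a fractional colouring `y` can be made to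
cover every vertex exactly once without changing its total weight: for each vertex `u` in turn,
keep the fraction `1 / coverage(u)` of the weight of every set containing `u` and move the rest to
the same set without `u`. Double counting then gives `∑ |I| z_I = n`, so the weight `K` of the
nonempty sets is at most `n`, and `z / n` with the remaining mass `1 - K / n` on the empty set is
feasible for the union problem, of value `K / n ≤ (∑ y) / n`.
-/

open Finset

section Coverage

variable {α : Type*} [DecidableEq α]

/-- The weight `(1 - t) * y J` of every set `J ∋ u` is moved to `J.erase u`. -/
noncomputable def shrinkAt (y : Finset α → ℝ) (u : α) (t : ℝ) (I : Finset α) : ℝ :=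
  if u ∈ I then t * y I else y I + (1 - t) * y (insert u I)

theorem shrinkAt_nonneg {y : Finset α → ℝ} (hy : 0 ≤ y) (u : α) {t : ℝ} (ht₀ : 0 ≤ t)
    (ht₁ : t ≤ 1) : 0 ≤ shrinkAt y u t := by
  intro I
  unfold shrinkAt
  split_ifs
  · exact mul_nonneg ht₀ (hy I)
  · exact add_nonneg (hy I) (mul_nonneg (sub_nonneg.2 ht₁) (hy _))

theorem shrinkAt_eq_zero_of_notMem {𝒜 : Set (Finset α)} (h𝒜 : IsLowerSet 𝒜) {y : Finset α → ℝ}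
    (hy : ∀ I ∉ 𝒜, y I = 0) (u : α) (t : ℝ) {I : Finset α} (hI : I ∉ 𝒜) :
    shrinkAt y u t I = 0 := by
  have hins : insert u I ∉ 𝒜 := fun h => hI (h𝒜 (subset_insert u I) h)
  unfold shrinkAt
  split_ifs <;> simp [hy I hI, hy _ hins]

theorem sum_filter_notMem_insert_eq_sum_filter_mem {s : Finset (Finset α)} {u : α}
    (hs : ∀ I, insert u I ∈ s ↔ I ∈ s) (f : Finset α → ℝ) :
    ∑ I ∈ s with u ∉ I, f (insert u I) = ∑ I ∈ s with u ∈ I, f I := by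
  refine sum_nbij' (insert u) (erase · u) ?_ ?_ ?_ ?_ fun _ _ => rfl
  · intro I hI
    rw [mem_filter] at hI ⊢
    exact ⟨(hs I).2 hI.1, mem_insert_self u I⟩
  · intro I hI
    rw [mem_filter] at hI ⊢
    exact ⟨(hs _).1 (by rw [insert_erase hI.2]; exact hI.1), notMem_erase u I⟩
  · intro I hI
    exact erase_insert (mem_filter.1 hI).2
  · intro I hI
    exact insert_erase (mem_filter.1 hI).2

theorem sum_shrinkAt {s : Finset (Finset α)} {u : α} (hs : ∀ I, insert u I ∈ s ↔ I ∈ s)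
    (y : Finset α → ℝ) (t : ℝ) : ∑ I ∈ s, shrinkAt y u t I = ∑ I ∈ s, y I := by
  rw [← sum_filter_add_sum_filter_not s (u ∈ ·), ← sum_filter_add_sum_filter_not s (u ∈ ·) y]
  have hmem : ∑ I ∈ s with u ∈ I, shrinkAt y u t I = t * ∑ I ∈ s with u ∈ I, y I := by
    rw [mul_sum]
    exact sum_congr rfl fun I hI => if_pos (mem_filter.1 hI).2
  have hnot : ∑ I ∈ s with u ∉ I, shrinkAt y u t I
      = ∑ I ∈ s with u ∉ I, y I + (1 - t) * ∑ I ∈ s with u ∈ I, y I := by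
    rw [← sum_filter_notMem_insert_eq_sum_filter_mem hs, mul_sum, ← sum_add_distrib]
    exact sum_congr rfl fun I hI => if_neg (mem_filter.1 hI).2
  rw [hmem, hnot]
  ring

variable [Fintype α]

noncomputable def coverage (y : Finset α → ℝ) (u : α) : ℝ :=
  ∑ I with u ∈ I, y I

theorem coverage_shrinkAt_self (y : Finset α → ℝ) (u : α) (t : ℝ) :
    coverage (shrinkAt y u t) u = t * coverage y u := by
  rw [coverage, coverage, mul_sum]
  exact sum_congr rfl fun I hI => if_pos (mem_filter.1 hI).2

theorem coverage_shrinkAt_of_ne (y : Finset α → ℝ) {u v : α} (hvu : v ≠ u) (t : ℝ) :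
    coverage (shrinkAt y u t) v = coverage y v :=
  sum_shrinkAt (fun I => by simp [hvu]) y t

theorem sum_univ_shrinkAt (y : Finset α → ℝ) (u : α) (t : ℝ) :
    ∑ I, shrinkAt y u t I = ∑ I, y I :=
  sum_shrinkAt (fun _ => by simp) y t

theorem exists_coverage_eq_one {𝒜 : Set (Finset α)} (h𝒜 : IsLowerSet 𝒜) {y : Finset α → ℝ}
    (hy : 0 ≤ y) (hy𝒜 : ∀ I ∉ 𝒜, y I = 0) (hcov : ∀ u, 1 ≤ coverage y u) :
    ∃ z : Finset α → ℝ, 0 ≤ z ∧ (∀ I ∉ 𝒜, z I = 0) ∧ (∀ u, coverage z u = 1) ∧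
      ∑ I, z I = ∑ I, y I := by
  suffices ∀ s : Finset α, ∃ z : Finset α → ℝ, 0 ≤ z ∧ (∀ I ∉ 𝒜, z I = 0) ∧
      (∀ u, 1 ≤ coverage z u) ∧ (∀ u ∈ s, coverage z u = 1) ∧ ∑ I, z I = ∑ I, y I by
    obtain ⟨z, hz, hz𝒜, -, hzcov, hzsum⟩ := this univ
    exact ⟨z, hz, hz𝒜, fun u => hzcov u (mem_univ u), hzsum⟩
  intro s
  induction s using Finset.induction_on with
  | empty => exact ⟨y, hy, hy𝒜, hcov, by simp, rfl⟩
  | @insert a s ha ih =>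
    obtain ⟨z, hz, hz𝒜, hzcov, hzs, hzsum⟩ := ih
    have hpos : 0 < coverage z a := one_pos.trans_le (hzcov a)
    have hself : coverage (shrinkAt z a (coverage z a)⁻¹) a = 1 := by
      rw [coverage_shrinkAt_self, inv_mul_cancel₀ hpos.ne']
    refine ⟨shrinkAt z a (coverage z a)⁻¹,
      shrinkAt_nonneg hz a (inv_nonneg.2 hpos.le) (inv_le_one_of_one_le₀ (hzcov a)),
      fun I hI => shrinkAt_eq_zero_of_notMem h𝒜 hz𝒜 a _ hI, fun u => ?_, fun u hu => ?_,
      by rw [sum_univ_shrinkAt, hzsum]⟩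
    · obtain rfl | hua := eq_or_ne u a
      · exact hself.ge
      · rw [coverage_shrinkAt_of_ne z hua]
        exact hzcov u
    · obtain rfl | hua := eq_or_ne u a
      · exact hself
      · rw [coverage_shrinkAt_of_ne z hua]
        exact hzs u ((mem_insert.1 hu).resolve_left hua)

theorem sum_card_mul_eq_sum_coverage (y : Finset α → ℝ) :
    ∑ I, (#I : ℝ) * y I = ∑ u, coverage y u := by
  simp only [coverage, sum_filter]
  rw [sum_comm]
  refine sum_congr rfl fun I _ => ?_
  rw [sum_ite_mem, univ_inter, sum_const, nsmul_eq_mul]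

theorem sum_nonempty_le_card {y : Finset α → ℝ} (hy : 0 ≤ y) (hcov : ∀ u, coverage y u = 1) :
    ∑ I with I.Nonempty, y I ≤ Fintype.card α :=
  calc ∑ I with I.Nonempty, y I ≤ ∑ I, (#I : ℝ) * y I := by
        rw [sum_filter]
        refine sum_le_sum fun I _ => ?_
        split_ifs with hI
        · exact le_mul_of_one_le_left (hy I) (by exact_mod_cast hI.card_pos)
        · exact mul_nonneg (Nat.cast_nonneg _) (hy I)
    _ = Fintype.card α := by simp [sum_card_mul_eq_sum_coverage, hcov]

end Coverage

section LinearPrograms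

variable {n : ℕ} (G : SimpleGraph (Fin n))

def unionValues : Set ℝ :=
  {c | ∃ x : Finset (Fin n) → ℝ, (∀ T, 0 ≤ x T) ∧ ∑ T, x T = 1 ∧
    (∀ u, ∑ T with u ∈ T, x T = 1 / n) ∧
    (∀ u v, G.Adj u v → ∑ T with u ∈ T ∧ v ∈ T, x T = 0) ∧
    c = ∑ T with T.Nonempty, x T}

def fracColoringValues : Set ℝ :=
  {c | ∃ y : Finset (Fin n) → ℝ, (∀ I, 0 ≤ y I) ∧
    (∀ I, ¬(I.Nonempty ∧ ∀ u ∈ I, ∀ v ∈ I, ¬G.Adj u v) → y I = 0) ∧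
    (∀ u, 1 ≤ ∑ I with u ∈ I, y I) ∧
    c = ∑ I, y I}

variable {G}

theorem fracColoringValues_nonempty : (fracColoringValues G).Nonempty := by
  refine ⟨_, fun I => if #I = 1 then 1 else 0, fun I => by positivity, fun I hI => ?_,
    fun u => ?_, rfl⟩
  · refine if_neg fun h => hI ⟨card_pos.1 (by omega), fun u hu v hv => ?_⟩
    rw [card_le_one.1 h.le u hu v hv]
    exact G.loopless.irrefl v
  · rw [sum_eq_single_of_mem {u} (by simp) fun I hI hIu => if_neg fun h => hIu ?_]
    · simp
    · obtain ⟨v, rfl⟩ := card_eq_one.1 h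
      rw [mem_singleton.1 (mem_filter.1 hI).2]

theorem unionValues_bddBelow : BddBelow (unionValues G) := by
  refine ⟨0, ?_⟩
  rintro _ ⟨x, hx, -, -, -, rfl⟩
  exact sum_nonneg fun T _ => hx T

theorem fracColoringValues_bddBelow : BddBelow (fracColoringValues G) := by
  refine ⟨0, ?_⟩
  rintro _ ⟨y, hy, -, -, rfl⟩
  exact sum_nonneg fun I _ => hy I

theorem mul_mem_fracColoringValues {c : ℝ} (hc : c ∈ unionValues G) :
    n * c ∈ fracColoringValues G := by
  obtain ⟨x, hx, -, hxcov, hxedge, rfl⟩ := hc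
  refine ⟨fun I => if I.Nonempty then n * x I else 0, fun I => ?_, fun I hI => ?_,
    fun u => ?_, by rw [← sum_filter, mul_sum]⟩
  · have := hx I
    positivity
  · dsimp only
    split_ifs with hne
    · obtain ⟨u, hu, v, hv, huv⟩ : ∃ u ∈ I, ∃ v ∈ I, G.Adj u v := by
        simpa [hne] using hI
      rw [(sum_eq_zero_iff_of_nonneg fun T _ => hx T).1 (hxedge u v huv) I
        (mem_filter.2 ⟨mem_univ I, hu, hv⟩), mul_zero]
    · rfl
  · rw [sum_congr rfl fun I hI => if_pos ⟨u, (mem_filter.1 hI).2⟩, ← mul_sum, hxcov u]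
    exact (mul_one_div_cancel ((Nat.cast_ne_zero (R := ℝ)).2 u.pos.ne')).ge

theorem exists_mem_unionValues_le {c : ℝ} (hc : c ∈ fracColoringValues G) :
    ∃ c' ∈ unionValues G, c' ≤ c / n := by
  obtain ⟨y, hy, hyind, hycov, rfl⟩ := hc
  obtain ⟨z, hz, hzind, hzcov, hzsum⟩ := exists_coverage_eq_one
    (𝒜 := {I | ∀ u ∈ I, ∀ v ∈ I, ¬G.Adj u v})
    (fun I J hJI hI u hu v hv => hI u (hJI hu) v (hJI hv)) hy
    (fun I hI => hyind I fun h => hI h.2) hycov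
  set K := ∑ I with I.Nonempty, z I
  have hKn : K ≤ n := by simpa using sum_nonempty_le_card hz hzcov
  have hKz : K ≤ ∑ I, z I := sum_le_sum_of_subset_of_nonneg (filter_subset _ _) fun I _ _ => hz I
  have hsum_nonempty : ∑ T with T.Nonempty, z T / n = K / n := by rw [sum_div]
  refine ⟨K / n, ⟨fun T => if T.Nonempty then z T / n else 1 - K / n, fun T => ?_, ?_,
    fun u => ?_, fun u v huv => ?_, ?_⟩, ?_⟩
  · dsimp only
    split_ifs
    · exact div_nonneg (hz T) n.cast_nonneg
    · exact sub_nonneg.2 (div_le_one_of_le₀ hKn n.cast_nonneg)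
  · rw [sum_ite, hsum_nonempty]
    simp [not_nonempty_iff_eq_empty, filter_eq']
  · rw [sum_congr rfl fun T hT => if_pos ⟨u, (mem_filter.1 hT).2⟩, ← sum_div]
    exact congrArg (· / (n : ℝ)) (hzcov u)
  · refine sum_eq_zero fun T hT => ?_
    obtain ⟨hu, hv⟩ := (mem_filter.1 hT).2
    rw [if_pos ⟨u, hu⟩, hzind T fun h => h u hu v hv huv, zero_div]
  · refine hsum_nonempty.symm.trans (sum_congr rfl fun T hT => ?_)
    exact (if_pos (mem_filter.1 hT).2).symm
  · rw [← hzsum]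
    exact div_le_div_of_nonneg_right hKz n.cast_nonneg

end LinearPrograms

/-- The minimum union probability for the instance built from a graph `G`
(`b_{u} = 1/n`, `b_{uv} = 0` on edges) equals `χ_f(G)/n`. -/
theorem stmt15 (n : ℕ) (hn : 0 < n) (G : SimpleGraph (Fin n)) :
    sInf {c : ℝ | ∃ x : Finset (Fin n) → ℝ,
        (∀ T, 0 ≤ x T) ∧ (∑ T, x T) = 1 ∧
        (∀ u : Fin n,
          ∑ T ∈ Finset.univ.filter (fun T : Finset (Fin n) => u ∈ T), x T = 1 / n) ∧
        (∀ u v : Fin n, G.Adj u v →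
          ∑ T ∈ Finset.univ.filter (fun T : Finset (Fin n) => u ∈ T ∧ v ∈ T), x T = 0) ∧
        c = ∑ T ∈ Finset.univ.filter (fun T : Finset (Fin n) => T.Nonempty), x T} =
    (sInf {c : ℝ | ∃ y : Finset (Fin n) → ℝ,
        (∀ I, 0 ≤ y I) ∧
        (∀ I : Finset (Fin n),
          ¬(I.Nonempty ∧ ∀ u ∈ I, ∀ v ∈ I, ¬G.Adj u v) → y I = 0) ∧
        (∀ u : Fin n,
          1 ≤ ∑ I ∈ Finset.univ.filter (fun I : Finset (Fin n) => u ∈ I), y I) ∧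
        c = ∑ I, y I}) / n := by
  change sInf (unionValues G) = sInf (fracColoringValues G) / n
  have hn' : (0 : ℝ) < n := Nat.cast_pos.2 hn
  obtain ⟨c₀, hc₀⟩ := fracColoringValues_nonempty (G := G)
  apply le_antisymm
  · rw [le_div_iff₀ hn']
    refine le_csInf ⟨c₀, hc₀⟩ fun c hc => ?_
    obtain ⟨c', hc', hle⟩ := exists_mem_unionValues_le hc
    calc sInf (unionValues G) * n ≤ c' * n := by
          gcongr
          exact csInf_le unionValues_bddBelow hc'
      _ ≤ c := (le_div_iff₀ hn').1 hle
  · obtain ⟨c₁, hc₁, -⟩ := exists_mem_unionValues_le hc₀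
    refine le_csInf ⟨c₁, hc₁⟩ fun c hc => ?_
    rw [div_le_iff₀ hn', mul_comm]
    exact csInf_le fracColoringValues_bddBelow (mul_mem_fracColoringValues hc)
end
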